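/- arXiv:2307.12096 — 8 statements merged into one kernel-verified Lean document; each statement's English description precedes it below -/
import Mathlib

section
/- Let a > 0 and fix x, y with x² + y² < a². Define r(z) as the unique nonnegative solution of r⁴ − r²(x² + y² + z² − a²) − a²z² = 0. Then, as z → 0, r(z) = (a/√(a² − x² − y²))·|z| + O(z²) (equivalently, r(z)/|z| → a/√(a² − x² − y²)). -/
open Filter Topology Set

/-!
Writing `b = x² + y² + z² − a²`, the quartic says `r² (r² − b) = a² z²`. As `z → 0`,
`b → −(a² − x² − y²) < 0`, so `r² − b` stays bounded below and `r² = O(z²) → 0`. Dividing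
by `z²` then gives `(r/|z|)² = a² / (r² − b) → a² / (a² − x² − y²)`.
-/

lemma tendsto_zero_of_mul_sub_eq {α : Type*} {l : Filter α} {u b w : α → ℝ} {β : ℝ}
    (hu : ∀ t, 0 ≤ u t) (huw : ∀ t, u t * (u t - b t) = w t)
    (hb : Tendsto b l (𝓝 β)) (hβ : β < 0) (hw : Tendsto w l (𝓝 0)) :
    Tendsto u l (𝓝 0) := by
  have hbound : ∀ᶠ t in l, u t ≤ (-2 / β) * w t := by
    filter_upwards [hb.eventually (gt_mem_nhds (show β < β / 2 by linarith))] with t ht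
    rw [← huw, div_mul_eq_mul_div, le_div_iff_of_neg hβ]
    nlinarith [hu t]
  have hw' : Tendsto (fun t => (-2 / β) * w t) l (𝓝 0) := by
    simpa using hw.const_mul (-2 / β)
  exact tendsto_of_tendsto_of_tendsto_of_le_of_le' tendsto_const_nhds hw'
    (Eventually.of_forall hu) hbound

lemma div_abs_eq_sqrt_of_quartic {a b r z : ℝ} (ha : a ≠ 0) (hz : z ≠ 0) (hr : 0 ≤ r)
    (h : r ^ 4 - r ^ 2 * b - a ^ 2 * z ^ 2 = 0) :
    r / |z| = √(a ^ 2 / (r ^ 2 - b)) := by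
  have hne : r ^ 2 - b ≠ 0 := by
    intro h0
    have : a ^ 2 * z ^ 2 = 0 := by linear_combination -h + r ^ 2 * h0
    simp_all
  rw [← Real.sqrt_sq (div_nonneg hr (abs_nonneg z)), div_pow, sq_abs]
  congr 1
  field_simp
  linear_combination h

/-- For `a > 0`, `x² + y² < a²` (a point of the disk), if `r z` is the nonnegative
solution of the Kerr–Schild quartic, then `r(z)/|z| → a/√(a² − x² − y²)` as `z → 0`
(`z ≠ 0`), i.e. `r(z) = (a/√(a² − x² − y²))·|z| + O(z²)`. -/
theorem stmt_1 (a x y : ℝ) (ha : 0 < a) (hxy : x ^ 2 + y ^ 2 < a ^ 2)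
    (r : ℝ → ℝ)
    (hr : ∀ z : ℝ, 0 ≤ r z ∧
      (r z) ^ 4 - (r z) ^ 2 * (x ^ 2 + y ^ 2 + z ^ 2 - a ^ 2) - a ^ 2 * z ^ 2 = 0) :
    Tendsto (fun z : ℝ => r z / |z|) (nhdsWithin 0 {0}ᶜ)
      (nhds (a / Real.sqrt (a ^ 2 - x ^ 2 - y ^ 2))) := by
  have hc : 0 < a ^ 2 - x ^ 2 - y ^ 2 := by linarith
  have hb : Tendsto (fun z : ℝ => x ^ 2 + y ^ 2 + z ^ 2 - a ^ 2) (𝓝[≠] 0)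
      (𝓝 (-(a ^ 2 - x ^ 2 - y ^ 2))) := by
    have hcont : Continuous fun z : ℝ => x ^ 2 + y ^ 2 + z ^ 2 - a ^ 2 := by fun_prop
    convert (hcont.tendsto 0).mono_left nhdsWithin_le_nhds using 2
    ring
  have hw : Tendsto (fun z : ℝ => a ^ 2 * z ^ 2) (𝓝[≠] 0) (𝓝 0) := by
    have hcont : Continuous fun z : ℝ => a ^ 2 * z ^ 2 := by fun_prop
    simpa using (hcont.tendsto 0).mono_left nhdsWithin_le_nhds
  have hr2 : Tendsto (fun z => r z ^ 2) (𝓝[≠] 0) (𝓝 0) :=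
    tendsto_zero_of_mul_sub_eq (fun z => sq_nonneg (r z))
      (fun z => by linear_combination (hr z).2) hb (neg_lt_zero.2 hc) hw
  have hlim : Tendsto (fun z => √(a ^ 2 / (r z ^ 2 - (x ^ 2 + y ^ 2 + z ^ 2 - a ^ 2))))
      (𝓝[≠] 0) (𝓝 (a / √(a ^ 2 - x ^ 2 - y ^ 2))) := by
    have := ((tendsto_const_nhds (x := a ^ 2)).div (hr2.sub hb)
      (by rw [zero_sub, neg_neg]; exact hc.ne')).sqrt
    rwa [zero_sub, neg_neg, Real.sqrt_div (sq_nonneg a), Real.sqrt_sq ha.le] at this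
  refine hlim.congr' ?_
  filter_upwards [self_mem_nhdsWithin] with z hz
  exact (div_abs_eq_sqrt_of_quartic ha.ne' hz (hr z).1 (hr z).2).symm
end

section
/- Let a > 0 and fix x, y with x² + y² = a². Define r(z) as the unique nonnegative solution of r⁴ − r²(x² + y² + z² − a²) − a²z² = 0. Then r(z)²/|z| → a as z → 0, i.e. r(z) ~ √(a|z|) near the ring. -/
open Filter Topology Set

/-- For `a > 0` and `x² + y² = a²` (a point over the ring), if `r z` is the nonnegative
solution of the Kerr–Schild quartic, then `r(z)²/|z| → a` as `z → 0`,
i.e. `r(z) ~ √(a|z|)` near the ring. -/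
theorem stmt_2 (a x y : ℝ) (ha : 0 < a) (hxy : x ^ 2 + y ^ 2 = a ^ 2)
    (r : ℝ → ℝ)
    (hr : ∀ z : ℝ, 0 ≤ r z ∧
      (r z) ^ 4 - (r z) ^ 2 * (x ^ 2 + y ^ 2 + z ^ 2 - a ^ 2) - a ^ 2 * z ^ 2 = 0) :
    Tendsto (fun z : ℝ => (r z) ^ 2 / |z|) (nhdsWithin 0 {0}ᶜ) (nhds a) := by
  have key : ∀ z : ℝ, z ≠ 0 →
      (r z) ^ 2 / |z| = (|z| + Real.sqrt (z ^ 2 + 4 * a ^ 2)) / 2 := by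
    intro z hz
    have hz' : 0 < |z| := abs_pos.mpr hz
    obtain ⟨hr0, hq⟩ := hr z
    set t := (r z) ^ 2 with ht
    have ht0 : 0 ≤ t := sq_nonneg _
    have hq' : t ^ 2 - t * z ^ 2 - a ^ 2 * z ^ 2 = 0 := by
      have : (r z) ^ 4 = t ^ 2 := by ring
      rw [hxy] at hq
      nlinarith [hq]
    have hs0 : (0:ℝ) ≤ z ^ 2 + 4 * a ^ 2 := by positivity
    set s := Real.sqrt (z ^ 2 + 4 * a ^ 2) with hs
    have hs2 : s ^ 2 = z ^ 2 + 4 * a ^ 2 := Real.sq_sqrt hs0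
    have hsge : |z| < s := by
      have : |z| ^ 2 < s ^ 2 := by
        rw [hs2, sq_abs]; nlinarith
      exact lt_of_pow_lt_pow_left₀ 2 (Real.sqrt_nonneg _) this
    -- (2t - z²)² = z²(z² + 4a²) = (|z| s)²
    have hsq : (2 * t - z ^ 2) ^ 2 = (|z| * s) ^ 2 := by
      have : (|z| * s) ^ 2 = z ^ 2 * (z ^ 2 + 4 * a ^ 2) := by
        rw [mul_pow, sq_abs, hs2]
      nlinarith [hq']
    have habs : 2 * t - z ^ 2 = |z| * s ∨ 2 * t - z ^ 2 = -(|z| * s) := by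
      have h2 : (2 * t - z ^ 2 - |z| * s) * (2 * t - z ^ 2 + |z| * s) = 0 := by
        nlinarith [hsq]
      rcases mul_eq_zero.mp h2 with h | h
      · left; linarith
      · right; linarith
    have hteq : 2 * t = z ^ 2 + |z| * s := by
      rcases habs with h | h
      · linarith
      · exfalso
        have hzs : z ^ 2 < |z| * s := by
          have : z ^ 2 = |z| * |z| := by rw [← sq_abs]; ring
          rw [this]
          exact mul_lt_mul_of_pos_left hsge hz'
        nlinarith
    have hz2 : z ^ 2 = |z| * |z| := by rw [← sq_abs]; ring
    field_simp
    nlinarith [hteq, hz2]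
  have hcont : Tendsto (fun z : ℝ => (|z| + Real.sqrt (z ^ 2 + 4 * a ^ 2)) / 2)
      (nhds 0) (nhds a) := by
    have h1 : Continuous fun z : ℝ => (|z| + Real.sqrt (z ^ 2 + 4 * a ^ 2)) / 2 := by
      continuity
    have h2 := h1.tendsto 0
    convert h2 using 2
    simp only [abs_zero, zero_add]
    rw [show (0:ℝ) ^ 2 + 4 * a ^ 2 = (2 * a) ^ 2 by ring,
      Real.sqrt_sq (by linarith)]
    ring
  refine Tendsto.congr' ?_ (hcont.mono_left nhdsWithin_le_nhds)
  filter_upwards [self_mem_nhdsWithin] with z hz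
  exact (key z hz).symm
end

section
/- Let M : ℝ → ℝ be C³ with M(0) = M'(0) = M''(0) = 0, and let a ≠ 0. Then the function λ₁(r, θ) = (2a² cos²θ · M'(r) + r(r² + a² cos²θ) M''(r)) / (r² + a² cos²θ)² remains bounded as (r, θ) → (0, π/2). -/
open Filter Topology Set

/-- For a `C³` mass function with `M(0) = M'(0) = M''(0) = 0` and `a ≠ 0`, the Ricci
eigenvalue `λ₁(r,θ) = (2a²cos²θ·M'(r) + r(r² + a²cos²θ)M''(r))/(r² + a²cos²θ)²`
remains bounded as `(r,θ) → (0, π/2)`. -/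
theorem stmt_4 (M : ℝ → ℝ) (a : ℝ) (ha : a ≠ 0)
    (hC : ContDiff ℝ 3 M) (h0 : M 0 = 0) (h1 : deriv M 0 = 0)
    (h2 : deriv (deriv M) 0 = 0) :
    ∃ C : ℝ, ∀ᶠ p : ℝ × ℝ in nhdsWithin (0, Real.pi / 2) {(0, Real.pi / 2)}ᶜ,
      |(2 * a ^ 2 * Real.cos p.2 ^ 2 * deriv M p.1 +
          p.1 * (p.1 ^ 2 + a ^ 2 * Real.cos p.2 ^ 2) * deriv (deriv M) p.1) /
        (p.1 ^ 2 + a ^ 2 * Real.cos p.2 ^ 2) ^ 2| ≤ C := by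
  -- M'' is C¹, hence Lipschitz near 0
  have hM2 : ContDiff ℝ 1 (deriv (deriv M)) := by
    have := hC.iterate_deriv' 1 2
    simpa [Function.iterate_succ, Function.comp] using this
  have hM1 : ContDiff ℝ 2 (deriv M) := by
    have := hC.iterate_deriv' 2 1
    simpa using this
  obtain ⟨K, t, ht, hK⟩ := hM2.contDiffAt.exists_lipschitzOnWith (x := 0)
  obtain ⟨ρ, hρ0, hρ⟩ := Metric.mem_nhds_iff.mp ht
  refine ⟨3 * K, ?_⟩
  have hball : ∀ᶠ p : ℝ × ℝ in nhdsWithin (0, Real.pi / 2) {(0, Real.pi / 2)}ᶜ,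
      |p.1| < ρ := by
    apply eventually_nhdsWithin_of_eventually_nhds
    have : Continuous fun p : ℝ × ℝ => |p.1| := continuous_fst.abs
    have h := this.continuousAt (x := ((0 : ℝ), Real.pi / 2))
    exact ContinuousAt.eventually_lt h continuousAt_const (by simpa using hρ0)
  filter_upwards [hball] with p hp
  set r := p.1
  set c := Real.cos p.2
  -- bounds on M'' and M' on the ball
  have hrball : r ∈ Metric.ball (0 : ℝ) ρ := by simpa [Real.dist_eq] using hp
  have h2bound : ∀ x : ℝ, |x| ≤ |r| → |deriv (deriv M) x| ≤ K * |x| := by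
    intro x hx
    have hxball : x ∈ t := hρ (by simp [Metric.mem_ball, Real.dist_eq]; linarith [abs_nonneg x, hp])
    have h0ball : (0 : ℝ) ∈ t := hρ (Metric.mem_ball_self hρ0)
    have := hK.dist_le_mul x hxball 0 h0ball
    simpa [h2, Real.dist_eq] using this
  have h1bound : |deriv M r| ≤ K * |r| * |r| := by
    have hconv : Convex ℝ (uIcc (0 : ℝ) r) := convex_uIcc _ _
    have hsub : ∀ x ∈ uIcc (0 : ℝ) r, |x| ≤ |r| := by
      intro x hx
      rw [Set.uIcc_eq_union] at hx
      rcases hx with hx | hx <;> rcases hx with ⟨h1', h2'⟩ <;> rw [abs_le] <;>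
        constructor <;> cases abs_cases r <;> linarith
    have hderiv : ∀ x ∈ uIcc (0 : ℝ) r,
        HasDerivWithinAt (deriv M) (deriv (deriv M) x) (uIcc (0 : ℝ) r) x := by
      intro x _
      exact ((hM1.differentiable (by norm_num)).differentiableAt.hasDerivAt).hasDerivWithinAt
    have := hconv.norm_image_sub_le_of_norm_hasDerivWithin_le (C := K * |r|) hderiv
      (fun x hx =>
        le_trans (by simpa using h2bound x (hsub x hx))
          (mul_le_mul_of_nonneg_left (hsub x hx) K.coe_nonneg))
      (Set.left_mem_uIcc) (Set.right_mem_uIcc)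
    simpa [h1, Real.norm_eq_abs] using this
  set S : ℝ := r ^ 2 + a ^ 2 * c ^ 2 with hS
  have hSnn : 0 ≤ S := by positivity
  have hKnn : (0 : ℝ) ≤ K := K.coe_nonneg
  rcases eq_or_lt_of_le hSnn with hS0 | hSpos
  · simp only [← hS0, ne_eq, OfNat.ofNat_ne_zero, not_false_eq_true, zero_pow, div_zero,
      abs_zero]
    positivity
  · rw [abs_div, div_le_iff₀ (by positivity)]
    have hr2 : r ^ 2 ≤ S := by nlinarith [sq_nonneg (a * c)]
    have hac : a ^ 2 * c ^ 2 ≤ S := by nlinarith [sq_nonneg r]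
    have hb2 : |deriv (deriv M) r| ≤ K * |r| := h2bound r le_rfl
    have hA : |2 * a ^ 2 * c ^ 2 * deriv M r| ≤ 2 * (a ^ 2 * c ^ 2) * (K * |r| * |r|) := by
      calc |2 * a ^ 2 * c ^ 2 * deriv M r| = 2 * (a ^ 2 * c ^ 2) * |deriv M r| := by
            rw [abs_mul, abs_of_nonneg (show (0:ℝ) ≤ 2 * a ^ 2 * c ^ 2 by positivity)]; ring
        _ ≤ 2 * (a ^ 2 * c ^ 2) * (K * |r| * |r|) :=
            mul_le_mul_of_nonneg_left h1bound (by positivity)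
    have hB : |r * S * deriv (deriv M) r| ≤ |r| * S * (K * |r|) := by
      rw [abs_mul, abs_mul, abs_of_nonneg hSnn]
      gcongr
    have hS2 : |S ^ 2| = S ^ 2 := abs_of_nonneg (by positivity)
    have hkey : 2 * (a ^ 2 * c ^ 2) * (K * |r| * |r|) + |r| * S * (K * |r|)
        ≤ 3 * K * S ^ 2 := by
      have hrr : |r| * |r| = r ^ 2 := by rw [← abs_mul, abs_of_nonneg (by nlinarith [sq_abs r, sq_nonneg r])]; ring
      have e : 2 * (a ^ 2 * c ^ 2) * (↑K * |r| * |r|) + |r| * S * (↑K * |r|)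
          = ↑K * ((2 * (a ^ 2 * c ^ 2) + S) * (|r| * |r|)) := by ring
      rw [e, hrr]
      have h3 : (2 * (a ^ 2 * c ^ 2) + S) * r ^ 2 ≤ 3 * S * S :=
        le_trans (mul_le_mul_of_nonneg_right (by linarith) (sq_nonneg r))
          (mul_le_mul_of_nonneg_left hr2 (by positivity))
      calc ↑K * ((2 * (a ^ 2 * c ^ 2) + S) * r ^ 2) ≤ ↑K * (3 * S * S) :=
            mul_le_mul_of_nonneg_left h3 hKnn
        _ = 3 * ↑K * S ^ 2 := by ring
    rw [hS2]
    calc |2 * a ^ 2 * c ^ 2 * deriv M r + r * S * deriv (deriv M) r|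
        ≤ |2 * a ^ 2 * c ^ 2 * deriv M r| + |r * S * deriv (deriv M) r| := abs_add_le _ _
      _ ≤ 2 * (a ^ 2 * c ^ 2) * (K * |r| * |r|) + |r| * S * (K * |r|) := add_le_add hA hB
      _ ≤ 3 * K * S ^ 2 := hkey
end

section
/- Let M : ℝ → ℝ be smooth with M(r) = c·rⁿ for n ≥ 3 odd. Then the function z ↦ −1 + 2M(|z|)·|z|/(z² + a²) is C^∞ on ℝ (for a ≠ 0), while for n ≥ 3 even the function z ↦ −1 + 2M(|z|)·|z|/(z² + a²) is Cⁿ but not C^{n+1} at z = 0 (assuming c ≠ 0). -/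
open Filter Topology

lemma hasDerivAt_mul_abs (x : ℝ) : HasDerivAt (fun z : ℝ => z * |z|) (2 * |x|) x := by
  rcases lt_trichotomy x 0 with hx | hx | hx
  · have h : HasDerivAt (fun z : ℝ => -(z * z)) (2 * |x|) x := by
      have := ((hasDerivAt_id x).mul (hasDerivAt_id x)).neg
      refine this.congr_deriv ?_
      simp only [id_eq]; rw [abs_of_neg hx]; ring
    refine h.congr_of_eventuallyEq ?_
    filter_upwards [Iio_mem_nhds hx] with z hz
    rw [abs_of_neg hz]; ring
  · subst hx
    rw [hasDerivAt_iff_tendsto_slope, abs_zero, mul_zero]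
    have habs : Tendsto (fun z : ℝ => |z|) (𝓝[≠] (0:ℝ)) (𝓝 0) :=
      (continuous_abs.tendsto' 0 0 abs_zero).mono_left nhdsWithin_le_nhds
    refine habs.congr' ?_
    filter_upwards [self_mem_nhdsWithin] with z hz
    have hz' : z ≠ 0 := hz
    simp only [slope_def_field, abs_zero, mul_zero, sub_zero]
    rw [mul_div_cancel_left₀ _ hz']
  · have h : HasDerivAt (fun z : ℝ => z * z) (2 * |x|) x := by
      have := (hasDerivAt_id x).mul (hasDerivAt_id x)
      refine this.congr_deriv ?_
      simp only [id_eq]; rw [abs_of_pos hx]; ring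
    refine h.congr_of_eventuallyEq ?_
    filter_upwards [Ioi_mem_nhds hx] with z hz
    rw [abs_of_pos hz]

lemma hasDerivAt_H (k : ℕ) (x : ℝ) :
    HasDerivAt (fun z : ℝ => z ^ (k + 1) * |z|) (((k : ℝ) + 2) * (x ^ k * |x|)) x := by
  have h := (hasDerivAt_pow k x).mul (hasDerivAt_mul_abs x)
  have heq : (fun z : ℝ => z ^ (k + 1) * |z|) = fun z : ℝ => z ^ k * (z * |z|) := by
    funext z; rw [pow_succ]; ring
  rw [heq]
  refine h.congr_deriv ?_
  rcases Nat.eq_zero_or_pos k with hk | hk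
  · subst hk; simp
  · have hx : x ^ (k - 1) * x = x ^ k := by
      rw [← pow_succ, Nat.sub_add_cancel hk]
    rw [show (k : ℝ) * x ^ (k - 1) * (x * |x|) + x ^ k * (2 * |x|)
        = (k : ℝ) * (x ^ (k - 1) * x) * |x| + x ^ k * (2 * |x|) by ring, hx]
    ring

lemma deriv_H (k : ℕ) :
    deriv (fun z : ℝ => z ^ (k + 1) * |z|) = fun x : ℝ => ((k : ℝ) + 2) * (x ^ k * |x|) := by
  funext x; exact (hasDerivAt_H k x).deriv

lemma contDiff_H : ∀ m : ℕ, ContDiff ℝ (m : ℕ∞) (fun z : ℝ => z ^ m * |z|) := by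
  intro m
  induction m with
  | zero =>
    rw [show ((0 : ℕ) : ℕ∞) = (0 : WithTop ℕ∞) by rfl, contDiff_zero]
    exact (continuous_pow 0).mul continuous_abs
  | succ m ih =>
    have hcast : (((m + 1 : ℕ) : ℕ∞) : WithTop ℕ∞) = ((m : ℕ∞) : WithTop ℕ∞) + 1 := by
      push_cast; rfl
    rw [hcast, contDiff_succ_iff_deriv]
    refine ⟨fun x => (hasDerivAt_H m x).differentiableAt, by simp, ?_⟩
    rw [deriv_H m]
    exact ih.const_smul (((m : ℝ)) + 2)

lemma contDiffAt_deriv {f : ℝ → ℝ} {x : ℝ} {m : ℕ}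
    (hf : ContDiffAt ℝ ((m : ℕ) + 1 : ℕ) f x) : ContDiffAt ℝ (m : ℕ) (deriv f) x := by
  have h1 : ContDiffAt ℝ (m : ℕ) (fderiv ℝ f) x := by
    apply hf.fderiv_right
    push_cast; rfl
  have h2 : ContDiffAt ℝ (m : ℕ) (fun y => fderiv ℝ f y (1 : ℝ)) x :=
    ((ContinuousLinearMap.apply ℝ ℝ (1 : ℝ)).contDiff.contDiffAt).comp x h1
  exact h2.congr_of_eventuallyEq (Eventually.of_forall fun y => rfl)

lemma not_contDiffAt_H : ∀ m : ℕ, ¬ ContDiffAt ℝ ((m + 1 : ℕ)) (fun z : ℝ => z ^ m * |z|) 0 := by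
  intro m
  induction m with
  | zero =>
    intro h
    simp only [pow_zero, one_mul] at h
    exact not_differentiableAt_abs_zero (h.differentiableAt (by norm_num))
  | succ m ih =>
    intro h
    have h' : ContDiffAt ℝ ((m + 1 : ℕ)) (deriv (fun z : ℝ => z ^ (m + 1) * |z|)) 0 :=
      contDiffAt_deriv h
    rw [deriv_H m] at h'
    have h'' : ContDiffAt ℝ ((m + 1 : ℕ)) (fun z : ℝ => z ^ m * |z|) 0 := by
      have := h'.const_smul (((m : ℝ) + 2)⁻¹)
      have hm2 : ((m : ℝ) + 2) ≠ 0 := by positivity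
      refine this.congr_of_eventuallyEq (Eventually.of_forall fun y => ?_)
      simp [smul_eq_mul, ← mul_assoc, inv_mul_cancel₀ hm2]
    exact ih h''

/-- For the mass function `M(r) = c rⁿ` with `n ≥ 3`, `a ≠ 0`, `c ≠ 0`, the axial metric
coefficient `g_tt(z) = −1 + 2c|z|^(n+1)/(z² + a²)` is `C^∞` on `ℝ` when `n` is odd,
while for `n` even it is `Cⁿ` but not `C^(n+1)` at `z = 0`. -/
theorem stmt_7 (a c : ℝ) (n : ℕ) (ha : a ≠ 0) (hc : c ≠ 0) (hn : 3 ≤ n) :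
    (Odd n →
      ContDiff ℝ (⊤ : ℕ∞) (fun z : ℝ => -1 + 2 * (c * |z| ^ n) * |z| / (z ^ 2 + a ^ 2))) ∧
    (Even n →
      ContDiff ℝ (n : ℕ∞) (fun z : ℝ => -1 + 2 * (c * |z| ^ n) * |z| / (z ^ 2 + a ^ 2)) ∧
      ¬ ContDiffAt ℝ ((n : ℕ∞) + 1)
        (fun z : ℝ => -1 + 2 * (c * |z| ^ n) * |z| / (z ^ 2 + a ^ 2)) 0) := by
  have hden : ∀ z : ℝ, z ^ 2 + a ^ 2 ≠ 0 := fun z => by positivity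
  constructor
  · intro hodd
    have heq : (fun z : ℝ => -1 + 2 * (c * |z| ^ n) * |z| / (z ^ 2 + a ^ 2))
        = fun z : ℝ => -1 + 2 * c * z ^ (n + 1) / (z ^ 2 + a ^ 2) := by
      funext z
      have h1 : |z| ^ (n + 1) = z ^ (n + 1) := (Odd.add_one hodd).pow_abs z
      rw [show 2 * (c * |z| ^ n) * |z| = 2 * c * (|z| ^ n * |z|) by ring, ← pow_succ, h1]
    rw [heq]
    refine contDiff_const.add (ContDiff.div ?_ ?_ hden)
    · exact (contDiff_const.mul (contDiff_id.pow (n + 1)))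
    · exact (contDiff_id.pow 2).add contDiff_const
  · intro heven
    have heq : (fun z : ℝ => -1 + 2 * (c * |z| ^ n) * |z| / (z ^ 2 + a ^ 2))
        = fun z : ℝ => -1 + 2 * c * (z ^ n * |z|) / (z ^ 2 + a ^ 2) := by
      funext z
      rw [show 2 * (c * |z| ^ n) * |z| = 2 * c * (|z| ^ n * |z|) by ring, heven.pow_abs z]
    rw [heq]
    constructor
    · refine contDiff_const.add (ContDiff.div ?_ ?_ hden)
      · exact contDiff_const.mul (contDiff_H n)
      · exact ((contDiff_id.pow 2).add contDiff_const).of_le le_top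
    · intro h
      have hcast : ((n : ℕ∞) : WithTop ℕ∞) + 1 = (((n + 1 : ℕ) : ℕ∞) : WithTop ℕ∞) := by
        push_cast; rfl
      rw [hcast] at h
      -- recover z^n * |z| from the function
      have hpoly : ContDiffAt ℝ ((n + 1 : ℕ)) (fun z : ℝ => z ^ 2 + a ^ 2) 0 :=
        ((contDiff_id.pow 2).add contDiff_const).contDiffAt
      have h2 : ContDiffAt ℝ ((n + 1 : ℕ))
          (fun z : ℝ => ((-1 + 2 * c * (z ^ n * |z|) / (z ^ 2 + a ^ 2)) + 1)
            * (z ^ 2 + a ^ 2) / (2 * c)) 0 := by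
        exact ((h.add contDiffAt_const).mul hpoly).div_const (2 * c)
      have h3 : ContDiffAt ℝ ((n + 1 : ℕ)) (fun z : ℝ => z ^ n * |z|) 0 := by
        refine h2.congr_of_eventuallyEq (Eventually.of_forall fun z => ?_)
        have hz := hden z
        field_simp
        ring
      exact not_contDiffAt_H n h3
end

section
/- Let a > 0 and define r(ρ, ψ) ≥ 0 near the ring by the relations r cosθ = ρ sinψ and (r² + a²) sin²θ = (a + ρ cosψ)², derived from the Kerr-Schild quartic. Then as ρ → 0⁺ with ψ fixed (ψ ≠ π), r(ρ, ψ)² / ρ → a(1 + cosψ), i.e. r ≈ √(a(1 + cosψ)ρ). -/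
open Filter Topology Set Real

/-!
Eliminating `θ` from the two relations gives the quartic
`r⁴ - (ρ² + 2aρ cos ψ) r² - a²ρ² sin²ψ = 0`, whose roots in `r²` are `ρ (a cos ψ ± √(a² + r²))`.
The minus root is `≤ 0` and is excluded for `ρ > 0` (it would force `r = 0`, `cos ψ = 1`, and then
`a² sin² θ = (a + ρ)² > a²`), so `r² / ρ = a cos ψ + √(a² + r²)`, which tends to
`a cos ψ + a` as `r → 0`.
-/

lemma toroidal_quartic {a ρ ψ r θ : ℝ} (h1 : r * cos θ = ρ * sin ψ)
    (h2 : (r ^ 2 + a ^ 2) * sin θ ^ 2 = (a + ρ * cos ψ) ^ 2) :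
    r ^ 4 = r ^ 2 * ρ ^ 2 + 2 * a * ρ * cos ψ * r ^ 2 + a ^ 2 * ρ ^ 2 * sin ψ ^ 2 := by
  linear_combination r ^ 2 * h2 - r ^ 2 * (r ^ 2 + a ^ 2) * sin_sq_add_cos_sq θ
    + (r ^ 2 + a ^ 2) * (r * cos θ + ρ * sin ψ) * h1 + ρ ^ 2 * r ^ 2 * sin_sq_add_cos_sq ψ

lemma sq_div_eq_of_toroidal {a ρ ψ r θ : ℝ} (ha : 0 < a) (hρ : 0 < ρ)
    (h1 : r * cos θ = ρ * sin ψ) (h2 : (r ^ 2 + a ^ 2) * sin θ ^ 2 = (a + ρ * cos ψ) ^ 2) :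
    r ^ 2 / ρ = a * cos ψ + √(a ^ 2 + r ^ 2) := by
  set s := √(a ^ 2 + r ^ 2)
  have hs : s ^ 2 = a ^ 2 + r ^ 2 := sq_sqrt (by positivity)
  have has : a ≤ s := le_sqrt_of_sq_le (by nlinarith)
  have hroots : (r ^ 2 - (a * cos ψ + s) * ρ) * (r ^ 2 - (a * cos ψ - s) * ρ) = 0 := by
    linear_combination toroidal_quartic h1 h2 - ρ ^ 2 * hs + a ^ 2 * ρ ^ 2 * sin_sq_add_cos_sq ψ
  rcases mul_eq_zero.mp hroots with h | h
  · rw [div_eq_iff hρ.ne']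
    linarith
  · exfalso
    have hcos : a * cos ψ ≤ a := by nlinarith [cos_le_one ψ]
    have hr : r ^ 2 = 0 := by nlinarith [sq_nonneg r]
    have hroot : a * cos ψ = s := by
      have := mul_eq_zero.mp (show (a * cos ψ - s) * ρ = 0 by linarith)
      exact sub_eq_zero.mp (this.resolve_right hρ.ne')
    have hcos_one : cos ψ = 1 := by nlinarith [cos_le_one ψ]
    rw [hr, hcos_one, zero_add] at h2
    nlinarith [sin_sq_le_one θ]

lemma tendsto_sqrt_sq_add_sq {α : Type*} {l : Filter α} {f : α → ℝ} (a : ℝ)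
    (hf : Tendsto f l (𝓝 0)) : Tendsto (fun x => √(a ^ 2 + f x ^ 2)) l (𝓝 |a|) := by
  rw [← sqrt_sq_eq_abs]
  simpa using ((tendsto_const_nhds (x := a ^ 2)).add (hf.pow 2)).sqrt

theorem stmt_12_general (a ψ : ℝ) (ha : 0 < a)
    (r θ : ℝ → ℝ)
    (h1 : ∀ᶠ ρ in nhdsWithin 0 (Set.Ioi 0), r ρ * Real.cos (θ ρ) = ρ * Real.sin ψ)
    (h2 : ∀ᶠ ρ in nhdsWithin 0 (Set.Ioi 0),
      ((r ρ) ^ 2 + a ^ 2) * Real.sin (θ ρ) ^ 2 = (a + ρ * Real.cos ψ) ^ 2)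
    (hlim : Tendsto r (nhdsWithin 0 (Set.Ioi 0)) (nhds 0)) :
    Tendsto (fun ρ : ℝ => (r ρ) ^ 2 / ρ) (nhdsWithin 0 (Set.Ioi 0))
      (nhds (a * (1 + Real.cos ψ))) := by
  have hsqrt := (tendsto_sqrt_sq_add_sq a hlim).const_add (a * cos ψ)
  rw [abs_of_pos ha, show a * cos ψ + a = a * (1 + cos ψ) by ring] at hsqrt
  refine hsqrt.congr' ?_
  filter_upwards [self_mem_nhdsWithin, h1, h2] with ρ hρ h1ρ h2ρ
  exact (sq_div_eq_of_toroidal ha hρ h1ρ h2ρ).symm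

/-- In toroidal coordinates around the ring, for `a > 0` and fixed direction `ψ ≠ π`
(i.e. `cos ψ ≠ −1`), if `r(ρ) ≥ 0` and `θ(ρ)` satisfy `r cos θ = ρ sin ψ` and
`(r² + a²) sin²θ = (a + ρ cos ψ)²` near `ρ = 0⁺`, with `r(ρ) → 0`, then
`r(ρ)²/ρ → a(1 + cos ψ)` as `ρ → 0⁺`, i.e. `r ≈ √(a(1 + cos ψ)ρ)`. -/
theorem stmt_12 (a ψ : ℝ) (ha : 0 < a) (hψ : Real.cos ψ ≠ -1)
    (r θ : ℝ → ℝ)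
    (hr0 : ∀ᶠ ρ in nhdsWithin 0 (Set.Ioi 0), 0 ≤ r ρ)
    (h1 : ∀ᶠ ρ in nhdsWithin 0 (Set.Ioi 0), r ρ * Real.cos (θ ρ) = ρ * Real.sin ψ)
    (h2 : ∀ᶠ ρ in nhdsWithin 0 (Set.Ioi 0),
      ((r ρ) ^ 2 + a ^ 2) * Real.sin (θ ρ) ^ 2 = (a + ρ * Real.cos ψ) ^ 2)
    (hlim : Tendsto r (nhdsWithin 0 (Set.Ioi 0)) (nhds 0)) :
    Tendsto (fun ρ : ℝ => (r ρ) ^ 2 / ρ) (nhdsWithin 0 (Set.Ioi 0))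
      (nhds (a * (1 + Real.cos ψ))) :=
  stmt_12_general a ψ ha r θ h1 h2 hlim
end

section
/- Suppose M(r) = m_n rⁿ + o(rⁿ) with n > 3 and a > 0. Then the Ricci scalar R = 2(2M'(r) + rM''(r))/(r² + a²cos²θ) tends to 0 along every toroidal approach to the ring (r = √(a(1+cosψ)ρ), a²cos²θ = aρ sin²ψ/(1+cosψ), ρ → 0⁺, ψ fixed, ψ ≠ π). -/
open Filter Topology Set Asymptotics

/-- For a mass function `M(r) = m_n rⁿ + o(rⁿ)` with `n > 3` (expansion stated for the
first two derivatives) and `a > 0`, the Ricci scalar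
`R = 2(2M'(r) + rM''(r))/(r² + a²cos²θ)` tends to `0` along every toroidal approach
to the ring (`r = √(a(1+cos ψ)ρ)`, `a²cos²θ = aρ sin²ψ/(1+cos ψ)`, `ρ → 0⁺`,
`ψ` fixed with `ψ ≠ π`, i.e. `cos ψ ≠ −1`). -/
theorem stmt_15 (M : ℝ → ℝ) (mn a ψ : ℝ) (n : ℕ) (hn : 3 < n) (ha : 0 < a)
    (hψ : Real.cos ψ ≠ -1)
    (hM1 : (fun r : ℝ => deriv M r - n * mn * r ^ (n - 1)) =o[nhdsWithin 0 (Set.Ioi 0)]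
      fun r : ℝ => r ^ (n - 1))
    (hM2 : (fun r : ℝ => deriv (deriv M) r - n * (n - 1) * mn * r ^ (n - 2))
      =o[nhdsWithin 0 (Set.Ioi 0)] fun r : ℝ => r ^ (n - 2)) :
    Tendsto
      (fun ρ : ℝ =>
        2 * (2 * deriv M (Real.sqrt (a * (1 + Real.cos ψ) * ρ)) +
            Real.sqrt (a * (1 + Real.cos ψ) * ρ) *
              deriv (deriv M) (Real.sqrt (a * (1 + Real.cos ψ) * ρ))) /
          (Real.sqrt (a * (1 + Real.cos ψ) * ρ) ^ 2 +
            a * ρ * Real.sin ψ ^ 2 / (1 + Real.cos ψ)))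
      (nhdsWithin 0 (Set.Ioi 0)) (nhds 0) := by
  obtain ⟨m, rfl⟩ : ∃ m, n = m + 4 := ⟨n - 4, by omega⟩
  simp only [show m + 4 - 1 = m + 3 from rfl, show m + 4 - 2 = m + 2 from rfl] at hM1 hM2
  have hcos : -1 ≤ Real.cos ψ := Real.neg_one_le_cos ψ
  have h1c : 0 < 1 + Real.cos ψ := by
    rcases lt_or_eq_of_le hcos with h | h
    · linarith
    · exact absurd h.symm hψ
  set c : ℝ := a * (1 + Real.cos ψ) with hcdef
  have hc : 0 < c := mul_pos ha h1c
  set r : ℝ → ℝ := fun ρ => Real.sqrt (c * ρ) with hrdef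
  have hL : Tendsto r (nhdsWithin 0 (Ioi 0)) (nhdsWithin 0 (Ioi 0)) := by
    rw [tendsto_nhdsWithin_iff]
    constructor
    · have hcont : Continuous fun ρ : ℝ => Real.sqrt (c * ρ) := by fun_prop
      have h0 := hcont.tendsto 0
      simp only [mul_zero, Real.sqrt_zero] at h0
      exact h0.mono_left nhdsWithin_le_nhds
    · filter_upwards [self_mem_nhdsWithin] with ρ hρ
      exact Real.sqrt_pos.mpr (mul_pos hc hρ)
  have hL0 : Tendsto r (nhdsWithin 0 (Ioi 0)) (nhds 0) := hL.mono_right nhdsWithin_le_nhds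
  have e1 := (hM1.comp_tendsto hL).tendsto_div_nhds_zero
  have e2 := (hM2.comp_tendsto hL).tendsto_div_nhds_zero
  -- r^(m+3)/ρ → 0
  have T0 : Tendsto (fun ρ => r ρ ^ (m+3) / ρ) (nhdsWithin 0 (Ioi 0)) (nhds 0) := by
    have h3 : Tendsto (fun ρ => c * r ρ ^ (m+1)) (nhdsWithin 0 (Ioi 0)) (nhds 0) := by
      have hp : Tendsto (fun ρ => r ρ ^ (m+1)) (nhdsWithin 0 (Ioi 0)) (nhds 0) := by
        have := hL0.pow (m+1)
        simpa [zero_pow (by omega : m + 1 ≠ 0)] using this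
      simpa using hp.const_mul c
    refine h3.congr' ?_
    filter_upwards [self_mem_nhdsWithin] with ρ hρ
    have hρ0 : (0:ℝ) < ρ := hρ
    have hr2 : r ρ ^ 2 = c * ρ := Real.sq_sqrt (le_of_lt (mul_pos hc hρ0))
    have hsplit : r ρ ^ (m+3) = r ρ ^ (m+1) * r ρ ^ 2 := by ring
    rw [hsplit, hr2]
    field_simp
  set D1 : ℝ → ℝ := fun ρ => deriv M (r ρ) - (m+4 : ℕ) * mn * (r ρ) ^ (m+3) with hD1
  set D2 : ℝ → ℝ :=
    fun ρ => deriv (deriv M) (r ρ) - (m+4 : ℕ) * ((m+4 : ℕ) - 1) * mn * (r ρ) ^ (m+2) with hD2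
  have key : Tendsto (fun ρ =>
      (1/a) * (2 * (D1 ρ / r ρ ^ (m+3)) * (r ρ ^ (m+3) / ρ)
        + (D2 ρ / r ρ ^ (m+2)) * (r ρ ^ (m+3) / ρ)
        + (2 * (m+4 : ℕ) * mn + (m+4 : ℕ) * ((m+4 : ℕ) - 1) * mn) * (r ρ ^ (m+3) / ρ)))
      (nhdsWithin 0 (Ioi 0)) (nhds 0) := by
    have t1 : Tendsto (fun ρ => 2 * (D1 ρ / r ρ ^ (m+3)) * (r ρ ^ (m+3) / ρ))
        (nhdsWithin 0 (Ioi 0)) (nhds 0) := by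
      have := ((e1.const_mul 2).mul T0)
      simpa [Function.comp, hD1] using this
    have t2 : Tendsto (fun ρ => (D2 ρ / r ρ ^ (m+2)) * (r ρ ^ (m+3) / ρ))
        (nhdsWithin 0 (Ioi 0)) (nhds 0) := by
      have := e2.mul T0
      simpa [Function.comp, hD2] using this
    have t3 : Tendsto
        (fun ρ => (2 * (m+4 : ℕ) * mn + (m+4 : ℕ) * ((m+4 : ℕ) - 1) * mn) * (r ρ ^ (m+3) / ρ))
        (nhdsWithin 0 (Ioi 0)) (nhds 0) := by
      simpa using T0.const_mul (2 * (m+4 : ℕ) * mn + ((m+4 : ℕ)) * (((m+4 : ℕ)) - 1) * mn)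
    have := ((t1.add t2).add t3).const_mul (1/a)
    simpa using this
  have alg : ∀ s u v ρ' : ℝ, s ≠ 0 → ρ' ≠ 0 →
      (1/a) * (2 * (u / s ^ (m+3)) * (s ^ (m+3) / ρ')
        + (v / s ^ (m+2)) * (s ^ (m+3) / ρ')
        + (2 * (m+4 : ℕ) * mn + (m+4 : ℕ) * ((m+4 : ℕ) - 1) * mn) * (s ^ (m+3) / ρ'))
      = 2 * (2 * (u + (m+4 : ℕ) * mn * s ^ (m+3))
          + s * (v + (m+4 : ℕ) * ((m+4 : ℕ) - 1) * mn * s ^ (m+2))) / (2 * a * ρ') := by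
    intro s u v ρ' hs hρ'
    have h1 : s ^ (m+3) ≠ 0 := pow_ne_zero _ hs
    have h2 : s ^ (m+2) ≠ 0 := pow_ne_zero _ hs
    field_simp
    ring
  refine key.congr' ?_
  filter_upwards [self_mem_nhdsWithin] with ρ hρ
  have hρ0 : (0:ℝ) < ρ := hρ
  have hr0 : 0 < r ρ := Real.sqrt_pos.mpr (mul_pos hc hρ0)
  have hr2 : r ρ ^ 2 = c * ρ := Real.sq_sqrt (le_of_lt (mul_pos hc hρ0))
  have hden : r ρ ^ 2 + a * ρ * Real.sin ψ ^ 2 / (1 + Real.cos ψ) = 2 * a * ρ := by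
    rw [hr2, hcdef]
    have hs : Real.sin ψ ^ 2 = 1 - Real.cos ψ ^ 2 := by
      have := Real.sin_sq_add_cos_sq ψ
      linarith
    field_simp
    rw [hs]; ring
  have hM1' : deriv M (r ρ) = D1 ρ + (m+4 : ℕ) * mn * (r ρ) ^ (m+3) := by
    simp [hD1]
  have hM2' : deriv (deriv M) (r ρ) =
      D2 ρ + (m+4 : ℕ) * ((m+4 : ℕ) - 1) * mn * (r ρ) ^ (m+2) := by
    simp [hD2]
  rw [hden, hM1', hM2']
  exact alg (r ρ) (D1 ρ) (D2 ρ) ρ (ne_of_gt hr0) (ne_of_gt hρ0)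
end

section
/- Suppose M(r) = m₃ r³ + o(r³), m₃ > 0, a > 0. Then along toroidal approach to the ring with direction ψ, the effective density μ = λ₂ = 2r²M'(r)/(r² + a²cos²θ)² tends to 6m₃cos⁴(ψ/2), and the effective pressure p_x = −λ₁ tends to 3m₃cos²(ψ/2)(cosψ − 3); in particular μ ≥ 0 and p_x ≤ 0 in every direction ψ, with both limits equal to 0 exactly when ψ = π. -/
open Filter Topology Set

/-- For a `C³` mass function with `M(r) = m₃r³ + o(r³)` (`M(0) = M'(0) = M''(0) = 0`,
`M'''(0) = 6m₃`), `m₃ > 0`, `a > 0`: along the toroidal approach to the ring with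
direction `ψ ∈ (−π, π)`, the effective density `μ = λ₂ = 2r²M'/(r² + a²cos²θ)²` tends to
`6m₃cos⁴(ψ/2)` and the effective pressure `p_x = −λ₁` tends to
`3m₃cos²(ψ/2)(cos ψ − 3)`; moreover, for every direction `ψ ∈ (−π, π]`, the limit
density is `≥ 0`, the limit pressure is `≤ 0`, and both vanish exactly when `ψ = π`. -/
theorem stmt_16 (M : ℝ → ℝ) (m₃ a : ℝ) (hm : 0 < m₃) (ha : 0 < a)
    (hC : ContDiff ℝ 3 M) (h0 : M 0 = 0) (h1 : deriv M 0 = 0)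
    (h2 : deriv (deriv M) 0 = 0) (h3 : deriv (deriv (deriv M)) 0 = 6 * m₃) :
    (∀ ψ ∈ Set.Ioo (-Real.pi) Real.pi,
      Tendsto
        (fun ρ : ℝ =>
          2 * Real.sqrt (a * (1 + Real.cos ψ) * ρ) ^ 2 *
              deriv M (Real.sqrt (a * (1 + Real.cos ψ) * ρ)) /
            (Real.sqrt (a * (1 + Real.cos ψ) * ρ) ^ 2 +
              a * ρ * Real.sin ψ ^ 2 / (1 + Real.cos ψ)) ^ 2)
        (nhdsWithin 0 (Set.Ioi 0)) (nhds (6 * m₃ * Real.cos (ψ / 2) ^ 4)) ∧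
      Tendsto
        (fun ρ : ℝ =>
          -((2 * (a * ρ * Real.sin ψ ^ 2 / (1 + Real.cos ψ)) *
                deriv M (Real.sqrt (a * (1 + Real.cos ψ) * ρ)) +
              Real.sqrt (a * (1 + Real.cos ψ) * ρ) *
                (Real.sqrt (a * (1 + Real.cos ψ) * ρ) ^ 2 +
                  a * ρ * Real.sin ψ ^ 2 / (1 + Real.cos ψ)) *
                deriv (deriv M) (Real.sqrt (a * (1 + Real.cos ψ) * ρ))) /
            (Real.sqrt (a * (1 + Real.cos ψ) * ρ) ^ 2 +
              a * ρ * Real.sin ψ ^ 2 / (1 + Real.cos ψ)) ^ 2))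
        (nhdsWithin 0 (Set.Ioi 0))
        (nhds (3 * m₃ * Real.cos (ψ / 2) ^ 2 * (Real.cos ψ - 3)))) ∧
    (∀ ψ ∈ Set.Ioc (-Real.pi) Real.pi,
      0 ≤ 6 * m₃ * Real.cos (ψ / 2) ^ 4 ∧
      3 * m₃ * Real.cos (ψ / 2) ^ 2 * (Real.cos ψ - 3) ≤ 0 ∧
      ((6 * m₃ * Real.cos (ψ / 2) ^ 4 = 0 ∧
        3 * m₃ * Real.cos (ψ / 2) ^ 2 * (Real.cos ψ - 3) = 0) ↔ ψ = Real.pi)) := by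
  have hM2 : ContDiff ℝ 2 (deriv M) := by
    have h := (contDiff_succ_iff_deriv (n := 2)).mp (by exact_mod_cast hC)
    exact h.2.2
  have hM1 : ContDiff ℝ 1 (deriv (deriv M)) := by
    have h := (contDiff_succ_iff_deriv (n := 1)).mp (by exact_mod_cast hM2)
    exact h.2.2
  -- second derivative divided by s
  have L2 : Tendsto (fun s : ℝ => deriv (deriv M) s / s) (𝓝[>] 0) (𝓝 (6 * m₃)) := by
    have hd3 : HasDerivAt (deriv (deriv M)) (6 * m₃) 0 := by
      have := ((hM1.differentiable one_ne_zero) 0).hasDerivAt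
      rwa [h3] at this
    have h := hasDerivAt_iff_tendsto_slope.mp hd3
    have h' : Tendsto (slope (deriv (deriv M)) 0) (𝓝[>] 0) (𝓝 (6 * m₃)) :=
      h.mono_left (nhdsWithin_mono 0 fun x hx => ne_of_gt hx)
    refine h'.congr fun x => ?_
    simp [slope_def_field, h2]
  -- first derivative divided by s², via L'Hôpital
  have L1 : Tendsto (fun s : ℝ => deriv M s / s ^ 2) (𝓝[>] 0) (𝓝 (3 * m₃)) := by
    have hdM0 : Tendsto (deriv M) (𝓝[>] 0) (𝓝 0) := by
      have h := hM2.continuous.tendsto 0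
      rw [h1] at h
      exact h.mono_left nhdsWithin_le_nhds
    have hg0 : Tendsto (fun x : ℝ => x ^ 2) (𝓝[>] (0:ℝ)) (𝓝 0) := by
      have h := (continuous_pow 2).tendsto (0:ℝ)
      simpa using h.mono_left nhdsWithin_le_nhds
    have hdiv : Tendsto (fun x : ℝ => deriv (deriv M) x / deriv (fun y : ℝ => y ^ 2) x)
        (𝓝[>] 0) (𝓝 (3 * m₃)) := by
      have h := L2.div_const 2
      rw [show (6:ℝ) * m₃ / 2 = 3 * m₃ by ring] at h
      refine h.congr' ?_
      filter_upwards [self_mem_nhdsWithin] with x hx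
      have hx' : (0:ℝ) < x := hx
      rw [deriv_pow_field]
      push_cast
      rw [pow_one, div_div, mul_comm x 2]
    exact deriv.lhopital_zero_nhdsGT
      (Eventually.of_forall fun x => (hM2.differentiable two_ne_zero).differentiableAt)
      (by
        filter_upwards [self_mem_nhdsWithin] with x hx
        have hx' : (0:ℝ) < x := hx
        rw [deriv_pow_field]
        push_cast
        rw [pow_one]
        exact mul_ne_zero two_ne_zero (ne_of_gt hx'))
      hdM0 hg0 hdiv
  refine ⟨fun ψ hψ => ?_, fun ψ hψ => ?_⟩
  · have hpi := Real.pi_pos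
    have hcoshalf : 0 < Real.cos (ψ / 2) :=
      Real.cos_pos_of_mem_Ioo ⟨by linarith [hψ.1], by linarith [hψ.2]⟩
    have hhalf : Real.cos (ψ / 2) ^ 2 = 1 / 2 + Real.cos ψ / 2 := by
      have h := Real.cos_sq (ψ / 2)
      rwa [show 2 * (ψ / 2) = ψ by ring] at h
    have h1c : 0 < 1 + Real.cos ψ := by nlinarith
    set k := a * (1 + Real.cos ψ) with hkdef
    have hk : 0 < k := mul_pos ha h1c
    have hs : Tendsto (fun ρ : ℝ => Real.sqrt (k * ρ)) (𝓝[>] 0) (𝓝[>] (0:ℝ)) := by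
      rw [tendsto_nhdsWithin_iff]
      constructor
      · have h : Tendsto (fun ρ : ℝ => Real.sqrt (k * ρ)) (𝓝 0) (𝓝 (Real.sqrt (k * 0))) :=
          (Real.continuous_sqrt.comp (continuous_const.mul continuous_id)).tendsto 0
        simpa using h.mono_left nhdsWithin_le_nhds
      · filter_upwards [self_mem_nhdsWithin] with ρ hρ
        exact Real.sqrt_pos.mpr (mul_pos hk hρ)
    have A : Tendsto (fun ρ : ℝ => deriv M (Real.sqrt (k * ρ)) / Real.sqrt (k * ρ) ^ 2)
        (𝓝[>] 0) (𝓝 (3 * m₃)) := L1.comp hs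
    have B : Tendsto (fun ρ : ℝ => deriv (deriv M) (Real.sqrt (k * ρ)) / Real.sqrt (k * ρ))
        (𝓝[>] 0) (𝓝 (6 * m₃)) := L2.comp hs
    constructor
    · have key : Tendsto (fun ρ : ℝ => (1 + Real.cos ψ) ^ 2 / 2 *
          (deriv M (Real.sqrt (k * ρ)) / Real.sqrt (k * ρ) ^ 2)) (𝓝[>] 0)
          (𝓝 ((1 + Real.cos ψ) ^ 2 / 2 * (3 * m₃))) := A.const_mul _
      have hval : (1 + Real.cos ψ) ^ 2 / 2 * (3 * m₃) = 6 * m₃ * Real.cos (ψ / 2) ^ 4 := by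
        rw [show Real.cos (ψ / 2) ^ 4 = (Real.cos (ψ / 2) ^ 2) ^ 2 by ring, hhalf]; ring
      rw [hval] at key
      refine key.congr' ?_
      filter_upwards [self_mem_nhdsWithin] with ρ hρ
      have hρ' : (0:ℝ) < ρ := hρ
      have hspos : 0 < Real.sqrt (k * ρ) := Real.sqrt_pos.mpr (mul_pos hk hρ')
      have hsq : Real.sqrt (k * ρ) ^ 2 = k * ρ := Real.sq_sqrt (mul_pos hk hρ').le
      have har : a * ρ = Real.sqrt (k * ρ) ^ 2 / (1 + Real.cos ψ) := by
        rw [hsq, hkdef]; field_simp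
      set s := Real.sqrt (k * ρ) with hsdef
      clear_value s
      have hN : a * ρ * Real.sin ψ ^ 2 / (1 + Real.cos ψ)
          = s ^ 2 * (1 - Real.cos ψ) / (1 + Real.cos ψ) := by
        rw [Real.sin_sq, har]; field_simp; ring
      have hD : s ^ 2 + a * ρ * Real.sin ψ ^ 2 / (1 + Real.cos ψ)
          = 2 * s ^ 2 / (1 + Real.cos ψ) := by
        rw [hN]; field_simp; ring
      rw [hD]; try rw [hN]
      field_simp
    · have key : Tendsto (fun ρ : ℝ => -((1 + Real.cos ψ) / 2) *
          ((1 - Real.cos ψ) * (deriv M (Real.sqrt (k * ρ)) / Real.sqrt (k * ρ) ^ 2) +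
            deriv (deriv M) (Real.sqrt (k * ρ)) / Real.sqrt (k * ρ))) (𝓝[>] 0)
          (𝓝 (-((1 + Real.cos ψ) / 2) * ((1 - Real.cos ψ) * (3 * m₃) + 6 * m₃))) :=
        ((A.const_mul _).add B).const_mul _
      have hval : -((1 + Real.cos ψ) / 2) * ((1 - Real.cos ψ) * (3 * m₃) + 6 * m₃)
          = 3 * m₃ * Real.cos (ψ / 2) ^ 2 * (Real.cos ψ - 3) := by
        rw [hhalf]; ring
      rw [hval] at key
      refine key.congr' ?_
      filter_upwards [self_mem_nhdsWithin] with ρ hρ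
      have hρ' : (0:ℝ) < ρ := hρ
      have hspos : 0 < Real.sqrt (k * ρ) := Real.sqrt_pos.mpr (mul_pos hk hρ')
      have hsq : Real.sqrt (k * ρ) ^ 2 = k * ρ := Real.sq_sqrt (mul_pos hk hρ').le
      have har : a * ρ = Real.sqrt (k * ρ) ^ 2 / (1 + Real.cos ψ) := by
        rw [hsq, hkdef]; field_simp
      set s := Real.sqrt (k * ρ) with hsdef
      clear_value s
      have hN : a * ρ * Real.sin ψ ^ 2 / (1 + Real.cos ψ)
          = s ^ 2 * (1 - Real.cos ψ) / (1 + Real.cos ψ) := by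
        rw [Real.sin_sq, har]; field_simp; ring
      have hD : s ^ 2 + a * ρ * Real.sin ψ ^ 2 / (1 + Real.cos ψ)
          = 2 * s ^ 2 / (1 + Real.cos ψ) := by
        rw [hN]; field_simp; ring
      rw [hD]; try rw [hN]
      field_simp
  · obtain ⟨hl, hr⟩ := hψ
    have hpi := Real.pi_pos
    have hc1 : Real.cos ψ ≤ 1 := Real.cos_le_one ψ
    have hnn : 0 ≤ 6 * m₃ * Real.cos (ψ / 2) ^ 4 :=
      mul_nonneg (by nlinarith) (by positivity)
    refine ⟨hnn, ?_, ?_⟩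
    · have h31 : Real.cos ψ - 3 ≤ 0 := by linarith
      have hpos : 0 ≤ 3 * m₃ * Real.cos (ψ / 2) ^ 2 :=
        mul_nonneg (by nlinarith) (by positivity)
      exact mul_nonpos_of_nonneg_of_nonpos hpos h31
    · constructor
      · rintro ⟨hμ, -⟩
        have hch : Real.cos (ψ / 2) = 0 := by
          by_contra h
          have h6 : (6:ℝ) * m₃ ≠ 0 := ne_of_gt (by nlinarith)
          exact (mul_ne_zero h6 (pow_ne_zero _ h)) hμ
        by_contra hne
        have hlt : ψ < Real.pi := lt_of_le_of_ne hr hne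
        have hp : 0 < Real.cos (ψ / 2) :=
          Real.cos_pos_of_mem_Ioo ⟨by linarith, by linarith⟩
        exact hp.ne' hch
      · rintro rfl
        rw [Real.cos_pi_div_two]
        norm_num
end

section
/- Let a > 0 and n ≥ 3, and set M(r) = c rⁿ. Fix (x₀, y₀) with x₀² + y₀² < a², and let r(x, y, z) be the nonnegative solution of the Kerr-Schild quartic near (x₀, y₀, 0). Then g_tt(x, y, z) = −1 + 2M(r)r³/(r⁴ + a²z²) extends to a function of (x, y, z) that is differentiable at z = 0 with ∂_z g_tt = 0 there. -/
open Filter Topology Set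

/-- For `a > 0`, `n ≥ 3`, `M(r) = c rⁿ`, and a point `(x₀, y₀)` of the disk
(`x₀² + y₀² < a²`), if `z ↦ r z` is the nonnegative solution of the Kerr–Schild quartic
near `z = 0`, then `g_tt = −1 + 2M(r)r³/(r⁴ + a²z²)` (extended by `−1` at `z = 0`,
where the fraction is `0/0`, read as `0`) is differentiable at `z = 0` with
`∂_z g_tt = 0` there. -/
theorem stmt_19 (a c x₀ y₀ : ℝ) (n : ℕ) (ha : 0 < a) (hn : 3 ≤ n)
    (hdisk : x₀ ^ 2 + y₀ ^ 2 < a ^ 2) (r : ℝ → ℝ)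
    (hr : ∀ᶠ z in nhds (0 : ℝ), 0 ≤ r z ∧
      (r z) ^ 4 - (r z) ^ 2 * (x₀ ^ 2 + y₀ ^ 2 + z ^ 2 - a ^ 2) - a ^ 2 * z ^ 2 = 0) :
    HasDerivAt
      (fun z : ℝ =>
        -1 + 2 * (c * (r z) ^ n) * (r z) ^ 3 / ((r z) ^ 4 + a ^ 2 * z ^ 2)) 0 0 := by
  obtain ⟨m, rfl⟩ : ∃ m, n = m + 3 := ⟨n - 3, by omega⟩
  have hd : 0 < a ^ 2 - (x₀ ^ 2 + y₀ ^ 2) := by linarith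
  set d := a ^ 2 - (x₀ ^ 2 + y₀ ^ 2) with hdef
  obtain ⟨hr0, hq0⟩ := hr.self_of_nhds
  have hsq0 : r 0 ^ 2 = 0 := by nlinarith [pow_nonneg hr0 4]
  have hr00 : r 0 = 0 := pow_eq_zero_iff two_ne_zero |>.mp hsq0
  set L := Real.sqrt (2 * a ^ 2 / d) with hLdef
  have hL0 : 0 ≤ L := Real.sqrt_nonneg _
  have hf0 : (-1 : ℝ) + 2 * (c * (r 0) ^ (m + 3)) * (r 0) ^ 3 /
      ((r 0) ^ 4 + a ^ 2 * 0 ^ 2) = -1 := by simp [hr00]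
  rw [hasDerivAt_iff_isLittleO]
  simp only [sub_zero, smul_zero, hf0]
  have hO : (fun z : ℝ => -1 + 2 * (c * (r z) ^ (m + 3)) * (r z) ^ 3 /
      ((r z) ^ 4 + a ^ 2 * z ^ 2) - (-1)) =O[𝓝 0] fun z => z ^ 2 := by
    rw [Asymptotics.isBigO_iff]
    refine ⟨2 * |c| * L ^ (m + 2), ?_⟩
    have hsmall : ∀ᶠ z in 𝓝 (0 : ℝ), |z| < min 1 (Real.sqrt (d / 2)) := by
      have hpos : 0 < min 1 (Real.sqrt (d / 2)) := by positivity
      simpa using eventually_abs_sub_lt (0 : ℝ) hpos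
    filter_upwards [hr, hsmall] with z hz hzlt
    obtain ⟨hrz, hq⟩ := hz
    have hz1 : |z| ≤ 1 := (lt_of_lt_of_le hzlt (min_le_left _ _)).le
    have hz2 : z ^ 2 ≤ d / 2 := by
      have h := lt_of_lt_of_le hzlt (min_le_right _ _)
      have hs := Real.sq_sqrt (by positivity : (0 : ℝ) ≤ d / 2)
      nlinarith [abs_nonneg z, sq_abs z, Real.sqrt_nonneg (d / 2)]
    have hrle : r z ≤ L * |z| := by
      have h1 : (r z) ^ 2 ≤ (2 * a ^ 2 / d) * z ^ 2 := by
        rw [div_mul_eq_mul_div, le_div_iff₀ hd]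
        nlinarith [pow_nonneg hrz 4, sq_nonneg (r z), sq_nonneg z]
      have h2 : (L * |z|) ^ 2 = (2 * a ^ 2 / d) * z ^ 2 := by
        rw [mul_pow, hLdef, Real.sq_sqrt (by positivity), sq_abs]
      have h3 : (r z) ^ 2 ≤ (L * |z|) ^ 2 := h2 ▸ h1
      exact (pow_le_pow_iff_left₀ hrz (by positivity) two_ne_zero).mp h3
    simp only [Real.norm_eq_abs, sub_neg_eq_add]
    rw [show -1 + 2 * (c * (r z) ^ (m + 3)) * (r z) ^ 3 / ((r z) ^ 4 + a ^ 2 * z ^ 2) + 1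
      = 2 * (c * (r z) ^ (m + 3)) * (r z) ^ 3 / ((r z) ^ 4 + a ^ 2 * z ^ 2) from by ring]
    rcases eq_or_lt_of_le hrz with hR | hR
    · rw [← hR]
      simp only [zero_pow, ne_eq, OfNat.ofNat_ne_zero, not_false_eq_true, mul_zero, zero_div]
      norm_num
      positivity
    · have hD : 0 < (r z) ^ 4 + a ^ 2 * z ^ 2 :=
        add_pos_of_pos_of_nonneg (pow_pos hR 4) (by positivity)
      have hnum : |2 * (c * (r z) ^ (m + 3)) * (r z) ^ 3| = 2 * |c| * (r z) ^ (m + 6) := by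
        rw [abs_mul, abs_mul, abs_mul, abs_pow, abs_pow, abs_of_nonneg hrz]
        rw [abs_two]
        ring
      rw [abs_div, hnum, abs_of_pos hD, div_le_iff₀ hD]
      have step1 : (r z) ^ (m + 6) ≤ (r z) ^ (m + 2) * ((r z) ^ 4 + a ^ 2 * z ^ 2) := by
        have : (r z) ^ (m + 6) = (r z) ^ (m + 2) * (r z) ^ 4 := by ring
        rw [this]
        have h4 : (r z) ^ 4 ≤ (r z) ^ 4 + a ^ 2 * z ^ 2 := by nlinarith [sq_nonneg (a * z)]
        exact mul_le_mul_of_nonneg_left h4 (pow_nonneg hrz _)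
      have step2 : (r z) ^ (m + 2) ≤ L ^ (m + 2) * |z ^ 2| := by
        calc (r z) ^ (m + 2) ≤ (L * |z|) ^ (m + 2) := pow_le_pow_left₀ hrz hrle _
          _ = L ^ (m + 2) * |z| ^ (m + 2) := by rw [mul_pow]
          _ ≤ L ^ (m + 2) * |z| ^ 2 :=
              mul_le_mul_of_nonneg_left
                (pow_le_pow_of_le_one (abs_nonneg z) hz1 (by omega)) (pow_nonneg hL0 _)
          _ = L ^ (m + 2) * |z ^ 2| := by rw [abs_pow]
      calc 2 * |c| * (r z) ^ (m + 6)
          ≤ 2 * |c| * ((r z) ^ (m + 2) * ((r z) ^ 4 + a ^ 2 * z ^ 2)) :=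
            mul_le_mul_of_nonneg_left step1 (by positivity)
          _ ≤ 2 * |c| * (L ^ (m + 2) * |z ^ 2| * ((r z) ^ 4 + a ^ 2 * z ^ 2)) :=
            mul_le_mul_of_nonneg_left (mul_le_mul_of_nonneg_right step2 hD.le) (by positivity)
          _ = 2 * |c| * L ^ (m + 2) * |z ^ 2| * ((r z) ^ 4 + a ^ 2 * z ^ 2) := by ring
  exact hO.trans_isLittleO (Asymptotics.isLittleO_pow_id (by norm_num))
end
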